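/- arXiv:2206.00137 — 2 statements merged into one kernel-verified Lean document; each statement's English description precedes it below -/
import Mathlib

section
/- Suppose f1/f0 is strictly increasing, continuous, and there exists a unique θ* with f1(θ*)/f0(θ*) = ((1−α)·u₋)/(α·u₊). Then θ* is the unique global maximizer of U(θ) = ∫_{θ}^{∞}(α·u₊·f1(x) − (1−α)·u₋·f0(x)) dx: the integrand is negative for x < θ* and positive for x > θ*, so U(θ) < U(θ*) for all θ ≠ θ*. -/
open MeasureTheory Set

section SignOfDifference

variable {K : Type*} [Field K] [LinearOrder K] [IsStrictOrderedRing K] {a b c d : K}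

theorem mul_sub_mul_neg_of_div_lt (hb : 0 < b) (hc : 0 < c) (h : a / b < d / c) :
    c * a - d * b < 0 := by
  rw [div_lt_div_iff₀ hb hc] at h
  linarith [mul_comm a c]

theorem mul_sub_mul_pos_of_div_lt (hb : 0 < b) (hc : 0 < c) (h : d / c < a / b) :
    0 < c * a - d * b := by
  rw [div_lt_div_iff₀ hc hb] at h
  linarith [mul_comm a c]

end SignOfDifference

section TailIntegral

variable {g : ℝ → ℝ} {a b : ℝ}

theorem setIntegral_Ioi_lt_of_pos_on (hg : IntegrableOn g (Ioi a)) (hab : a < b)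
    (hpos : ∀ x ∈ Ioo a b, 0 < g x) : ∫ x in Ioi b, g x < ∫ x in Ioi a, g x := by
  have hgab : IntervalIntegrable g volume a b :=
    (intervalIntegrable_iff_integrableOn_Ioc_of_le hab.le).2 (hg.mono_set Ioc_subset_Ioi_self)
  have hsplit := intervalIntegral.integral_Ioi_sub_Ioi hg hab.le
  linarith [intervalIntegral.intervalIntegral_pos_of_pos_on hgab hpos hab]

theorem setIntegral_Ioi_lt_of_neg_on (hg : IntegrableOn g (Ioi a)) (hab : a < b)
    (hneg : ∀ x ∈ Ioo a b, g x < 0) : ∫ x in Ioi a, g x < ∫ x in Ioi b, g x := by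
  have h := setIntegral_Ioi_lt_of_pos_on hg.neg hab fun x hx => neg_pos.2 (hneg x hx)
  simpa only [Pi.neg_apply, integral_neg, neg_lt_neg_iff] using h

theorem setIntegral_Ioi_lt_of_sign_change {t θ : ℝ} (hg : Integrable g)
    (hneg : ∀ x < t, g x < 0) (hpos : ∀ x > t, 0 < g x) (hθ : θ ≠ t) :
    ∫ x in Ioi θ, g x < ∫ x in Ioi t, g x := by
  rcases hθ.lt_or_gt with hθt | htθ
  · exact setIntegral_Ioi_lt_of_neg_on hg.integrableOn hθt fun x hx => hneg x hx.2
  · exact setIntegral_Ioi_lt_of_pos_on hg.integrableOn htθ fun x hx => hpos x hx.1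

end TailIntegral

theorem stmt_3_general (f1 f0 : ℝ → ℝ)
    (hp0 : ∀ x, 0 < f0 x)
    (hi1 : Integrable f1) (hi0 : Integrable f0)
    (hmono : StrictMono (fun x => f1 x / f0 x))
    (α : ℝ) (hα : α ∈ Set.Ioo (0:ℝ) 1) (up um : ℝ) (hup : 0 < up)
    (θstar : ℝ) (hstar : f1 θstar / f0 θstar = ((1 - α) * um) / (α * up)) :
    (∀ x < θstar, α * up * f1 x - (1 - α) * um * f0 x < 0) ∧
    (∀ x > θstar, 0 < α * up * f1 x - (1 - α) * um * f0 x) ∧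
    (∀ θ : ℝ, θ ≠ θstar →
      (∫ x in Set.Ioi θ, (α * up * f1 x - (1 - α) * um * f0 x)) <
      (∫ x in Set.Ioi θstar, (α * up * f1 x - (1 - α) * um * f0 x))) := by
  have hc : 0 < α * up := mul_pos hα.1 hup
  have hneg : ∀ x < θstar, α * up * f1 x - (1 - α) * um * f0 x < 0 := fun x hx =>
    mul_sub_mul_neg_of_div_lt (hp0 x) hc (hstar ▸ hmono hx)
  have hpos : ∀ x > θstar, 0 < α * up * f1 x - (1 - α) * um * f0 x := fun x hx =>
    mul_sub_mul_pos_of_div_lt (hp0 x) hc (hstar ▸ hmono hx)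
  exact ⟨hneg, hpos, fun θ hθ =>
    setIntegral_Ioi_lt_of_sign_change ((hi1.const_mul _).sub (hi0.const_mul _)) hneg hpos hθ⟩

theorem stmt_3 (f1 f0 : ℝ → ℝ) (hc1 : Continuous f1) (hc0 : Continuous f0)
    (hp1 : ∀ x, 0 < f1 x) (hp0 : ∀ x, 0 < f0 x)
    (hi1 : Integrable f1) (hi0 : Integrable f0)
    (hmono : StrictMono (fun x => f1 x / f0 x))
    (α : ℝ) (hα : α ∈ Set.Ioo (0:ℝ) 1) (up um : ℝ) (hup : 0 < up) (hum : 0 < um)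
    (θstar : ℝ) (hstar : f1 θstar / f0 θstar = ((1 - α) * um) / (α * up)) :
    (∀ x < θstar, α * up * f1 x - (1 - α) * um * f0 x < 0) ∧
    (∀ x > θstar, 0 < α * up * f1 x - (1 - α) * um * f0 x) ∧
    (∀ θ : ℝ, θ ≠ θstar →
      (∫ x in Set.Ioi θ, (α * up * f1 x - (1 - α) * um * f0 x)) <
      (∫ x in Set.Ioi θstar, (α * up * f1 x - (1 - α) * um * f0 x))) :=
  stmt_3_general f1 f0 hp0 hi1 hi0 hmono α hα up um hup θstar hstar
end

section
/- FPR optimality condition in terms of γ: assuming f0_g(θ_g) > 0, the equation Σ_g n_g·(α_g u₊ · f1_g(θ_g)/f0_g(θ_g) − (1−α_g) u₋) = 0 is equivalent to n_a(1−α_a)/(1−γ_a(θ_a)) + n_b(1−α_b)/(1−γ_b(θ_b)) = ((u₊+u₋)/u₊)·(n_a(1−α_a) + n_b(1−α_b)). -/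
/-!
Writing `γ = α f₁ / (α f₁ + (1 - α) f₀)` for the posterior, one has
`(1 - α) / (1 - γ) = α f₁ / f₀ + (1 - α)`, so the `γ`-form of the condition is the
likelihood-ratio form plus `Σ n (1 - α)` on both sides, divided by `u₊`.
-/

lemma one_sub_div_one_sub_posterior {α f₁ f₀ : ℝ} (hα : α ≠ 1) (hf₀ : f₀ ≠ 0)
    (hD : α * f₁ + (1 - α) * f₀ ≠ 0) (n : ℝ) :
    n * (1 - α) / (1 - α * f₁ / (α * f₁ + (1 - α) * f₀)) = n * (α * (f₁ / f₀) + (1 - α)) := by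
  have hden : 1 - α * f₁ / (α * f₁ + (1 - α) * f₀) = (1 - α) * f₀ / (α * f₁ + (1 - α) * f₀) := by
    field_simp
    ring
  rw [hden]
  field_simp

lemma posterior_denom_pos {α f₁ f₀ : ℝ} (hα : α ∈ Set.Ioo (0 : ℝ) 1) (hf₁ : 0 < f₁)
    (hf₀ : 0 < f₀) : 0 < α * f₁ + (1 - α) * f₀ :=
  add_pos (mul_pos hα.1 hf₁) (mul_pos (sub_pos.mpr hα.2) hf₀)

theorem stmt_14_general (na nb : ℝ)
    (αa αb : ℝ) (hαa : αa ∈ Set.Ioo (0:ℝ) 1) (hαb : αb ∈ Set.Ioo (0:ℝ) 1)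
    (up um : ℝ) (hup : 0 < up)
    (f1a f0a f1b f0b : ℝ) (hf1a : 0 < f1a) (hf0a : 0 < f0a)
    (hf1b : 0 < f1b) (hf0b : 0 < f0b) :
    na * (αa * up * (f1a / f0a) - (1 - αa) * um)
      + nb * (αb * up * (f1b / f0b) - (1 - αb) * um) = 0
    ↔ na * (1 - αa) / (1 - αa * f1a / (αa * f1a + (1 - αa) * f0a))
        + nb * (1 - αb) / (1 - αb * f1b / (αb * f1b + (1 - αb) * f0b))
        = ((up + um) / up) * (na * (1 - αa) + nb * (1 - αb)) := by
  rw [one_sub_div_one_sub_posterior hαa.2.ne hf0a.ne' (posterior_denom_pos hαa hf1a hf0a).ne',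
    one_sub_div_one_sub_posterior hαb.2.ne hf0b.ne' (posterior_denom_pos hαb hf1b hf0b).ne',
    div_mul_eq_mul_div, eq_div_iff hup.ne']
  constructor <;> intro h <;> linear_combination h

theorem stmt_14 (na nb : ℝ) (hna : 0 < na) (hnb : 0 < nb)
    (αa αb : ℝ) (hαa : αa ∈ Set.Ioo (0:ℝ) 1) (hαb : αb ∈ Set.Ioo (0:ℝ) 1)
    (up um : ℝ) (hup : 0 < up) (hum : 0 < um)
    (f1a f0a f1b f0b : ℝ) (hf1a : 0 < f1a) (hf0a : 0 < f0a)
    (hf1b : 0 < f1b) (hf0b : 0 < f0b) :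
    na * (αa * up * (f1a / f0a) - (1 - αa) * um)
      + nb * (αb * up * (f1b / f0b) - (1 - αb) * um) = 0
    ↔ na * (1 - αa) / (1 - αa * f1a / (αa * f1a + (1 - αa) * f0a))
        + nb * (1 - αb) / (1 - αb * f1b / (αb * f1b + (1 - αb) * f0b))
        = ((up + um) / up) * (na * (1 - αa) + nb * (1 - αb)) :=
  stmt_14_general na nb αa αb hαa hαb up um hup f1a f0a f1b f0b hf1a hf0a hf1b hf0b
end
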